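/- arXiv:0803.2806 — 8 statements merged into one kernel-verified Lean document; each statement's English description precedes it below -/
import Mathlib

section
/- Let N ≥ 1, p = 2N+1, and for k ∈ {1,...,N}, let c_k = cos(kπ/(N+1)) and s_k = sin(kπ/(N+1)). Let J_a^0 be the p×p symmetric tridiagonal matrix with zero diagonal and off-diagonal entries a_1 = a, a_2 = 1, a_3 = a, a_4 = 1, ..., i.e., a_{2n+1} = a and a_{2n} = 1. Then the eigenvalues of J_a^0 are 0 and ±(a² − 2ac_k + 1)^{1/2} for k = 1,...,N. -/
def J0 (N : ℕ) (a : ℝ) : Matrix (Fin (2*N+1)) (Fin (2*N+1)) ℝ :=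
  Matrix.of fun i j =>
    if (j : ℕ) = (i : ℕ) + 1 then (if (i : ℕ) % 2 = 0 then a else 1)
    else if (i : ℕ) = (j : ℕ) + 1 then (if (j : ℕ) % 2 = 0 then a else 1)
    else 0

def cc (a : ℝ) (n : ℕ) : ℝ := if n % 2 = 0 then a else 1

def Yext (N : ℕ) (y : Fin (2*N+1) → ℝ) (n : ℕ) : ℝ :=
  if h : n < 2*N+1 then y ⟨n, h⟩ else 0

lemma Yext_lt (N : ℕ) (y : Fin (2*N+1) → ℝ) {n : ℕ} (h : n < 2*N+1) :
    Yext N y n = y ⟨n, h⟩ := dif_pos h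

lemma Yext_ge (N : ℕ) (y : Fin (2*N+1) → ℝ) {n : ℕ} (h : ¬ n < 2*N+1) :
    Yext N y n = 0 := dif_neg h

lemma sum_ite_nat {n : ℕ} (t : ℕ) (g : Fin n → ℝ) :
    (∑ j : Fin n, (if (j : ℕ) = t then g j else 0)) =
      if h : t < n then g ⟨t, h⟩ else 0 := by
  split_ifs with h
  · have e : ∀ j : Fin n, ((j : ℕ) = t) = (j = ⟨t, h⟩) := by
      intro j; simp [Fin.ext_iff]
    simp_rw [e]
    simp
  · apply Finset.sum_eq_zero
    intro j _
    rw [if_neg]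
    have := j.isLt
    omega

lemma mulVec_J0 (N : ℕ) (a : ℝ) (y : Fin (2*N+1) → ℝ) (i : Fin (2*N+1)) :
    (J0 N a).mulVec y i =
      (if 1 ≤ (i : ℕ) then cc a ((i : ℕ)-1) * Yext N y ((i : ℕ)-1) else 0)
        + cc a (i : ℕ) * Yext N y ((i : ℕ)+1) := by
  have hsplit : ∀ j : Fin (2*N+1), J0 N a i j * y j =
      (if (j : ℕ) = (i : ℕ)-1 ∧ 1 ≤ (i : ℕ) then cc a ((j : ℕ)) * y j else 0)
        + (if (j : ℕ) = (i : ℕ)+1 then cc a ((i : ℕ)) * y j else 0) := by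
    intro j
    have hj := j.isLt; have hi := i.isLt
    unfold J0 cc
    simp only [Matrix.of_apply]
    split_ifs <;> first | ring1 | (exfalso; omega)
  unfold Matrix.mulVec dotProduct
  rw [Finset.sum_congr rfl (fun j _ => hsplit j), Finset.sum_add_distrib]
  congr 1
  · by_cases hi : 1 ≤ (i : ℕ)
    · have e : ∀ j : Fin (2*N+1), ((j : ℕ) = (i : ℕ)-1 ∧ 1 ≤ (i : ℕ)) = ((j : ℕ) = (i : ℕ)-1) := by
        intro j; simp [hi]
      simp_rw [e, sum_ite_nat ((i : ℕ)-1) (fun j => cc a (j : ℕ) * y j)]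
      have h1 : (i : ℕ) - 1 < 2*N+1 := by have := i.isLt; omega
      rw [dif_pos h1, if_pos hi, Yext_lt N y h1]
    · rw [if_neg hi]
      apply Finset.sum_eq_zero
      intro j _
      rw [if_neg]
      tauto
  · rw [sum_ite_nat ((i : ℕ)+1) (fun j => cc a (i : ℕ) * y j)]
    unfold Yext
    split_ifs <;> simp

lemma eigen_iff (N : ℕ) (a μ : ℝ) (y : Fin (2*N+1) → ℝ) :
    (J0 N a).mulVec y = μ • y ↔
      ∀ n : ℕ, n ≤ 2*N →
        (if 1 ≤ n then cc a (n-1) * Yext N y (n-1) else 0)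
          + cc a n * Yext N y (n+1) = μ * Yext N y n := by
  constructor
  · intro h n hn
    have hn' : n < 2*N+1 := by omega
    have := congrFun h ⟨n, hn'⟩
    rw [mulVec_J0] at this
    simpa [Yext_lt N y hn'] using this
  · intro h
    funext i
    rw [mulVec_J0]
    have hi : (i : ℕ) < 2*N+1 := i.isLt
    have := h i (by omega)
    simpa [Yext_lt N y hi] using this

lemma exists_zero (N : ℕ) (a : ℝ) :
    ∃ y : Fin (2*N+1) → ℝ, y ≠ 0 ∧ (J0 N a).mulVec y = (0:ℝ) • y := by
  refine ⟨fun i => if (i : ℕ) % 2 = 0 then (-a)^((i : ℕ)/2) else 0, ?_, ?_⟩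
  · intro h
    have := congrFun h ⟨0, by omega⟩
    simp at this
  · rw [eigen_iff]
    intro n hn
    rcases Nat.even_or_odd n with ⟨m, hm⟩ | ⟨m, hm⟩
    · subst hm
      have h1 : ¬ (m + m + 1) % 2 = 0 := by omega
      have h2 : ∀ k, k % 2 = 1 → Yext N (fun i => if (i : ℕ) % 2 = 0 then (-a)^((i : ℕ)/2) else 0) k = 0 := by
        intro k hk
        unfold Yext
        split_ifs with h
        · show (if k % 2 = 0 then (-a)^(k/2) else (0:ℝ)) = 0
          rw [if_neg (by omega)]
        · rfl
      rw [h2 (m + m + 1) (by omega)]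
      by_cases hm0 : 1 ≤ m + m
      · rw [if_pos hm0, h2 (m + m - 1) (by omega)]
        ring
      · rw [if_neg hm0]
        ring
    · subst hm
      have hlt1 : 2*m < 2*N+1 := by omega
      have hlt2 : 2*m+2 < 2*N+1 := by omega
      rw [if_pos (by omega : 1 ≤ 2*m+1)]
      have e1 : 2*m+1-1 = 2*m := by omega
      rw [e1, Yext_lt N _ hlt1, Yext_lt N _ hlt2, Yext_lt N _ (by omega : 2*m+1 < 2*N+1)]
      simp only
      rw [if_pos (by omega : (2*m) % 2 = 0), if_pos (by omega : (2*m+2) % 2 = 0),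
        if_neg (by omega : ¬ (2*m+1) % 2 = 0)]
      unfold cc
      rw [if_pos (by omega : (2*m) % 2 = 0), if_neg (by omega : ¬ (2*m+1) % 2 = 0)]
      have e2 : (2*m)/2 = m := by omega
      have e3 : (2*m+2)/2 = m+1 := by omega
      rw [e2, e3]
      ring

lemma exists_pm (N : ℕ) (hN : 1 ≤ N) (a μ : ℝ) (k : ℕ) (hk1 : 1 ≤ k) (hk2 : k ≤ N)
    (hμ0 : μ ≠ 0) (hμ2 : μ^2 = a^2 - 2*a*Real.cos (k*Real.pi/(N+1)) + 1) :
    ∃ y : Fin (2*N+1) → ℝ, y ≠ 0 ∧ (J0 N a).mulVec y = μ • y := by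
  set θ : ℝ := Real.pi - k*Real.pi/(N+1) with hθ
  have hN1 : ((N:ℝ)+1) ≠ 0 := by positivity
  have hcos : Real.cos θ = - Real.cos (k*Real.pi/(N+1)) := Real.cos_pi_sub _
  have hμ2' : μ^2 = a^2 + 2*a*Real.cos θ + 1 := by rw [hcos]; linarith [hμ2]
  have hsintop : Real.sin (((N:ℝ)+1)*θ) = 0 := by
    have e : ((N:ℝ)+1)*θ = (((N:ℤ)+1-k : ℤ) : ℝ) * Real.pi := by
      rw [hθ]; push_cast; field_simp
    rw [e, Real.sin_int_mul_pi]
  set y : Fin (2*N+1) → ℝ := fun i =>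
    if (i:ℕ) % 2 = 0 then
      Real.sin (((i:ℕ)/2 : ℕ) * θ) + a * Real.sin (((((i:ℕ)/2 : ℕ)+1 : ℕ)) * θ)
    else μ * Real.sin (((((i:ℕ)+1)/2 : ℕ)) * θ) with hy
  have hEven : ∀ m : ℕ, m ≤ N →
      Yext N y (2*m) = Real.sin ((m:ℝ)*θ) + a * Real.sin (((m:ℝ)+1)*θ) := by
    intro m hm
    rw [Yext_lt N y (by omega : 2*m < 2*N+1)]
    show (if (2*m) % 2 = 0 then
      Real.sin (((2*m)/2 : ℕ) * θ) + a * Real.sin ((((2*m)/2 : ℕ)+1 : ℕ) * θ)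
      else μ * Real.sin ((((2*m+1)/2 : ℕ)) * θ)) = _
    rw [if_pos (by omega : (2*m) % 2 = 0)]
    have e : (2*m)/2 = m := by omega
    rw [e]; push_cast; ring_nf
  have hOdd : ∀ m : ℕ, m ≤ N →
      Yext N y (2*m+1) = μ * Real.sin (((m:ℝ)+1)*θ) := by
    intro m hm
    rcases Nat.lt_or_ge m N with h | h
    · rw [Yext_lt N y (by omega : 2*m+1 < 2*N+1)]
      show (if (2*m+1) % 2 = 0 then
        Real.sin (((2*m+1)/2 : ℕ) * θ) + a * Real.sin ((((2*m+1)/2 : ℕ)+1 : ℕ) * θ)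
        else μ * Real.sin ((((2*m+1+1)/2 : ℕ)) * θ)) = _
      rw [if_neg (by omega : ¬ (2*m+1) % 2 = 0)]
      have e : (2*m+1+1)/2 = m+1 := by omega
      rw [e]; push_cast; ring_nf
    · have hm' : m = N := by omega
      rw [Yext_ge N y (by omega), hm', hsintop]
      ring
  refine ⟨y, ?_, ?_⟩
  · intro h
    have h1 : y ⟨1, by omega⟩ = 0 := congrFun h ⟨1, by omega⟩
    have : y ⟨1, by omega⟩ = μ * Real.sin ((1:ℕ) * θ) := by
      show (if (1:ℕ) % 2 = 0 then _ else μ * Real.sin ((((1+1)/2 : ℕ)) * θ)) = _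
      rw [if_neg (by omega)]
    rw [this] at h1
    have hsθ : Real.sin θ > 0 := by
      rw [hθ, Real.sin_pi_sub]
      apply Real.sin_pos_of_pos_of_lt_pi
      · positivity
      · rw [div_lt_iff₀ (by positivity)]
        have : (k:ℝ) < (N:ℝ)+1 := by exact_mod_cast Nat.lt_succ_of_le hk2
        nlinarith [Real.pi_pos]
    simp only [Nat.cast_one, one_mul] at h1
    rcases mul_eq_zero.1 h1 with h | h
    · exact hμ0 h
    · linarith
  · rw [eigen_iff]
    intro n hn
    rcases Nat.even_or_odd n with ⟨m, hm⟩ | ⟨m, hm⟩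
    · have hm2 : n = 2*m := by omega
      subst hm2
      match m with
      | 0 =>
        rw [if_neg (by omega : ¬ 1 ≤ 2*0)]
        have e0 : 2*0 = 0 := by omega
        have e1 : 2*0+1 = 2*0+1 := rfl
        rw [show (2*0 : ℕ) = 0 from rfl] at *
        rw [show (0:ℕ)+1 = 2*0+1 from rfl, hOdd 0 (by omega), hEven 0 (by omega)]
        unfold cc
        rw [if_pos (by omega : (0:ℕ) % 2 = 0)]
        push_cast
        simp [Real.sin_zero]
        ring
      | m+1 =>
        rw [if_pos (by omega : 1 ≤ 2*(m+1))]
        have hmN : m + 1 ≤ N := by omega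
        have e1 : 2*(m+1) - 1 = 2*m+1 := by omega
        have e2 : 2*(m+1) + 1 = 2*(m+1)+1 := rfl
        rw [e1, hOdd m (by omega), show 2*(m+1)+1 = 2*(m+1)+1 from rfl, hOdd (m+1) hmN,
          hEven (m+1) hmN]
        unfold cc
        rw [if_neg (by omega : ¬ (2*m+1) % 2 = 0), if_pos (by omega : (2*(m+1)) % 2 = 0)]
        push_cast
        ring
    · have hm2 : n = 2*m+1 := by omega
      subst hm2
      have hmN : m < N := by omega
      rw [if_pos (by omega : 1 ≤ 2*m+1)]
      have e1 : 2*m+1-1 = 2*m := by omega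
      have e2 : 2*m+1+1 = 2*(m+1) := by omega
      rw [e1, e2, hEven m (by omega), hEven (m+1) (by omega), hOdd m (by omega)]
      unfold cc
      rw [if_pos (by omega : (2*m) % 2 = 0), if_neg (by omega : ¬ (2*m+1) % 2 = 0)]
      have key : Real.sin ((m:ℝ)*θ) + Real.sin (((m:ℝ)+1+1)*θ)
          = 2 * Real.cos θ * Real.sin (((m:ℝ)+1)*θ) := by
        rw [show (m:ℝ)*θ = ((m:ℝ)+1)*θ - θ by ring,
          show ((m:ℝ)+1+1)*θ = ((m:ℝ)+1)*θ + θ by ring,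
          Real.sin_sub, Real.sin_add]
        ring
      push_cast
      linear_combination a * key - Real.sin (((m:ℝ)+1)*θ) * hμ2'

lemma cheb_big (N : ℕ) (lam : ℝ) (hlam : 2 ≤ lam) (u : ℕ → ℝ)
    (h0 : u 0 = 0) (h1 : u 1 = 1)
    (hrec : ∀ m, m < N → u (m+2) = lam * u (m+1) - u m) :
    ∀ m, m ≤ N → 1 ≤ u (m+1) ∧ u m ≤ u (m+1) := by
  intro m
  induction m with
  | zero => intro _; rw [h0, h1]; norm_num
  | succ m ih =>
    intro hm
    obtain ⟨ih1, ih2⟩ := ih (by omega)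
    rw [hrec m (by omega)]
    constructor
    · nlinarith
    · nlinarith

lemma cheb (N : ℕ) (hN : 1 ≤ N) (lam : ℝ) (u : ℕ → ℝ)
    (h0 : u 0 = 0) (h1 : u 1 = 1) (htop : u (N+1) = 0)
    (hrec : ∀ m, m < N → u (m+2) = lam * u (m+1) - u m) :
    ∃ j ∈ Finset.Icc 1 N, lam = 2 * Real.cos (j*Real.pi/(N+1)) := by
  rcases le_or_gt 2 lam with hge | hlt
  · exfalso
    have := (cheb_big N lam hge u h0 h1 hrec N le_rfl).1
    rw [htop] at this; linarith
  rcases le_or_gt lam (-2) with hle | hgt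
  · exfalso
    have hb := cheb_big N (-lam) (by linarith) (fun m => (-1)^(m+1) * u m)
      (by simp [h0]) (by simp [h1]) ?_ N le_rfl
    · have := hb.1
      simp only [htop, mul_zero] at this; linarith
    · intro m hm
      rw [hrec m hm]; ring
  -- now -2 < lam < 2
  have hb1 : -1 ≤ lam/2 := by linarith
  have hb2 : lam/2 ≤ 1 := by linarith
  set θ := Real.arccos (lam/2) with hθ
  have hc : Real.cos θ = lam/2 := Real.cos_arccos hb1 hb2
  have hθpos : 0 < θ := Real.arccos_pos.2 (by linarith)
  have hθlt : θ < Real.pi := by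
    rcases lt_or_eq_of_le (Real.arccos_le_pi (lam/2)) with h | h
    · exact h
    · exact absurd (Real.arccos_eq_pi.1 h) (by linarith)
  have hs : 0 < Real.sin θ := Real.sin_pos_of_pos_of_lt_pi hθpos hθlt
  have key : ∀ m, m ≤ N →
      u m * Real.sin θ = Real.sin ((m:ℝ)*θ) ∧
      u (m+1) * Real.sin θ = Real.sin (((m:ℝ)+1)*θ) := by
    intro m
    induction m with
    | zero => intro _; constructor <;> simp [h0, h1]
    | succ m ih =>
      intro hm
      obtain ⟨ih1, ih2⟩ := ih (by omega)
      have step : u (m+2) * Real.sin θ = Real.sin (((m:ℝ)+2)*θ) := by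
        rw [hrec m (by omega),
          show ((m:ℝ)+2)*θ = (((m:ℝ)+1)*θ) + θ by ring, Real.sin_add]
        have e : Real.sin ((m:ℝ)*θ) = Real.sin (((m:ℝ)+1)*θ) * Real.cos θ
            - Real.cos (((m:ℝ)+1)*θ) * Real.sin θ := by
          rw [show (m:ℝ)*θ = (((m:ℝ)+1)*θ) - θ by ring, Real.sin_sub]
        linear_combination lam * ih2 - ih1 - e
          - 2 * Real.sin (((m:ℝ)+1)*θ) * hc
      constructor
      · push_cast; exact ih2
      · push_cast
        have e2 : ((m:ℝ)+1+1) = (m:ℝ)+2 := by ring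
        rw [e2]; exact step
  have htopsin : Real.sin (((N:ℝ)+1)*θ) = 0 := by
    have := (key N le_rfl).2
    rw [htop] at this; linarith
  obtain ⟨n, hn⟩ := Real.sin_eq_zero_iff.1 htopsin
  have hπ := Real.pi_pos
  have hNθ : 0 < ((N:ℝ)+1)*θ := by positivity
  have hNθ2 : ((N:ℝ)+1)*θ < ((N:ℝ)+1)*Real.pi := by
    apply mul_lt_mul_of_pos_left hθlt (by positivity)
  have hn1 : 0 < n := by
    by_contra h
    push_neg at h
    have : (n:ℝ) * Real.pi ≤ 0 := by
      apply mul_nonpos_of_nonpos_of_nonneg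
      · exact_mod_cast h
      · linarith
    rw [← hn] at hNθ; linarith
  have hn2 : (n:ℝ) < (N:ℝ)+1 := by
    have : (n:ℝ) * Real.pi < ((N:ℝ)+1) * Real.pi := by rw [hn]; exact hNθ2
    exact lt_of_mul_lt_mul_right this (le_of_lt hπ)
  have hn2' : n ≤ N := by
    have : n < (N:ℤ)+1 := by exact_mod_cast hn2
    omega
  refine ⟨n.toNat, ?_, ?_⟩
  · rw [Finset.mem_Icc]
    omega
  · have hcast : ((n.toNat : ℕ) : ℝ) = (n : ℝ) := by
      exact_mod_cast congrArg (Int.cast : ℤ → ℝ) (Int.toNat_of_nonneg (le_of_lt hn1))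
    rw [hcast]
    have hθeq : θ = (n:ℝ)*Real.pi/((N:ℝ)+1) := by
      field_simp
      linarith [hn]
    rw [← hθeq, hc]; ring

/-- The eigenvalues of `J_a^0` are exactly `0` and `±(a² − 2a c_k + 1)^{1/2}`,
`k = 1,…,N`, where `c_k = cos(kπ/(N+1))`. -/
theorem eigenvalues_J0 (N : ℕ) (hN : 1 ≤ N) (a : ℝ) (ha : a ∈ Set.Icc (0:ℝ) 2) (μ : ℝ) :
    (∃ y : Fin (2*N+1) → ℝ, y ≠ 0 ∧ (J0 N a).mulVec y = μ • y) ↔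
      (μ = 0 ∨ ∃ k ∈ Finset.Icc 1 N,
        μ = Real.sqrt (a^2 - 2*a*Real.cos (k*Real.pi/(N+1)) + 1) ∨
        μ = -Real.sqrt (a^2 - 2*a*Real.cos (k*Real.pi/(N+1)) + 1)) := by
  constructor
  · rintro ⟨y, hy0, heig⟩
    by_cases hμ : μ = 0
    · exact Or.inl hμ
    right
    rw [eigen_iff] at heig
    set v : ℕ → ℝ := fun m => match m with
      | 0 => 0
      | m+1 => Yext N y (2*m+1) with hv
    have hv0 : v 0 = 0 := rfl
    have hv1e : ∀ m : ℕ, v (m+1) = Yext N y (2*m+1) := fun m => rfl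
    have hvtop : v (N+1) = 0 := by
      rw [hv1e N]
      exact Yext_ge N y (by omega)
    have hEe : ∀ m, m ≤ N → v m + a * v (m+1) = μ * Yext N y (2*m) := by
      intro m hm
      match m with
      | 0 =>
        have h := heig 0 (by omega)
        rw [if_neg (by omega)] at h
        unfold cc at h
        rw [if_pos (by omega : (0:ℕ)%2 = 0)] at h
        rw [hv0, hv1e 0]
        have e : 2*0+1 = 0+1 := by omega
        rw [e]
        linarith [h]
      | m+1 =>
        have h := heig (2*(m+1)) (by omega)
        rw [if_pos (by omega)] at h
        have e1 : 2*(m+1)-1 = 2*m+1 := by omega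
        rw [e1] at h
        unfold cc at h
        rw [if_neg (by omega : ¬ (2*m+1)%2 = 0), if_pos (by omega : (2*(m+1))%2 = 0)] at h
        rw [hv1e m, hv1e (m+1)]
        have e2 : 2*(m+1)+1 = 2*(m+1)+1 := rfl
        linarith [h]
    have hEo : ∀ m, m < N → a * Yext N y (2*m) + Yext N y (2*m+2) = μ * v (m+1) := by
      intro m hm
      have h := heig (2*m+1) (by omega)
      rw [if_pos (by omega)] at h
      have e1 : 2*m+1-1 = 2*m := by omega
      rw [e1] at h
      unfold cc at h
      rw [if_pos (by omega : (2*m)%2 = 0), if_neg (by omega : ¬ (2*m+1)%2 = 0)] at h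
      rw [hv1e m]
      have e2 : 2*m+1+1 = 2*m+2 := by omega
      rw [e2] at h
      linarith [h]
    have hrec' : ∀ m, m < N → a * v m + a * v (m+2) = (μ^2 - a^2 - 1) * v (m+1) := by
      intro m hm
      have h1 := hEe m (by omega)
      have h2 := hEe (m+1) (by omega)
      have h3 := hEo m hm
      have e : 2*(m+1) = 2*m+2 := by omega
      rw [e] at h2
      linear_combination μ * h3 + a * h1 + h2
    have hzero : (∀ m, m ≤ N+1 → v m = 0) → y = 0 := by
      intro hall
      funext i
      have hi := i.isLt
      have hYi : Yext N y (i:ℕ) = y i := by rw [Yext_lt N y hi]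
      show y i = 0
      rcases Nat.even_or_odd (i:ℕ) with ⟨m, hm⟩ | ⟨m, hm⟩
      · have hmN : m ≤ N := by omega
        have h := hEe m hmN
        rw [hall m (by omega), hall (m+1) (by omega)] at h
        have h0 : Yext N y (2*m) = 0 := by
          have : μ * Yext N y (2*m) = 0 := by linarith
          rcases mul_eq_zero.1 this with h' | h'
          · exact absurd h' hμ
          · exact h'
        rw [show 2*m = (i:ℕ) by omega] at h0
        rw [← hYi]; exact h0
      · have := hall (m+1) (by omega)
        rw [hv1e m] at this
        rw [show 2*m+1 = (i:ℕ) by omega] at this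
        rw [← hYi]; exact this
    by_cases hall : ∀ m, m ≤ N+1 → v m = 0
    · exact absurd (hzero hall) hy0
    push_neg at hall
    obtain ⟨m0, hm0le, hm0⟩ := hall
    by_cases haz : a = 0
    · have hsq : μ^2 = 1 := by
        have h1 : m0 ≠ 0 := fun h => hm0 (h ▸ hv0)
        have h2 : m0 ≠ N+1 := fun h => hm0 (h ▸ hvtop)
        obtain ⟨m', rfl⟩ : ∃ m', m0 = m'+1 := ⟨m0-1, by omega⟩
        have h := hrec' m' (by omega)
        rw [haz] at h
        simp only [zero_mul, add_zero, zero_add] at h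
        have : (μ^2 - 0^2 - 1) * v (m'+1) = 0 := by linarith
        rcases mul_eq_zero.1 this with h' | h'
        · nlinarith [h']
        · exact absurd h' hm0
      refine ⟨1, Finset.mem_Icc.2 ⟨le_rfl, hN⟩, ?_⟩
      rw [haz]
      have e : (0:ℝ)^2 - 2*0*Real.cos ((1:ℕ)*Real.pi/((N:ℝ)+1)) + 1 = 1 := by ring
      rw [e, Real.sqrt_one]
      have h : (μ-1)*(μ+1) = 0 := by linear_combination hsq
      rcases mul_eq_zero.1 h with h' | h'
      · left; linarith
      · right; linarith
    · have hv1 : v 1 ≠ 0 := by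
        intro h
        apply hm0
        have hind : ∀ m, m ≤ N → v m = 0 ∧ v (m+1) = 0 := by
          intro m
          induction m with
          | zero => intro _; exact ⟨hv0, h⟩
          | succ m ih =>
            intro hm
            obtain ⟨i1, i2⟩ := ih (by omega)
            refine ⟨i2, ?_⟩
            have hr := hrec' m (by omega)
            rw [i1, i2] at hr
            simp only [mul_zero, add_zero, zero_add] at hr
            have h2 : a * v (m+2) = 0 := by linarith
            rcases mul_eq_zero.1 h2 with h' | h'
            · exact absurd h' haz
            · exact h'
        rcases Nat.lt_or_ge m0 (N+1) with h' | h'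
        · exact (hind m0 (by omega)).1
        · have : m0 = N+1 := by omega
          rw [this]; exact hvtop
      set lam : ℝ := (μ^2 - a^2 - 1)/a with hlam
      have hrecu : ∀ m, m < N →
          (fun m => v m / v 1) (m+2) = lam * ((fun m => v m / v 1) (m+1)) - (fun m => v m / v 1) m := by
        intro m hm
        dsimp only
        have hr := hrec' m hm
        have hstep : v (m+2) = lam * v (m+1) - v m := by
          rw [hlam]
          field_simp
          linear_combination hr
        rw [hstep]
        ring
      obtain ⟨j, hj, hjlam⟩ := cheb N hN lam (fun m => v m / v 1)
        (by simp [hv0]) (div_self hv1) (by simp [hvtop]) hrecu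
      rw [Finset.mem_Icc] at hj
      refine ⟨N+1-j, Finset.mem_Icc.2 ⟨by omega, by omega⟩, ?_⟩
      have hcaste : ((N+1-j : ℕ) : ℝ) = (N:ℝ)+1-(j:ℝ) := by
        have : j ≤ N+1 := by omega
        push_cast [Nat.cast_sub this]
        ring
      have hN1 : ((N:ℝ)+1) ≠ 0 := by positivity
      have hjk : (j:ℝ)*Real.pi/((N:ℝ)+1) = Real.pi - ((N+1-j : ℕ):ℝ)*Real.pi/((N:ℝ)+1) := by
        rw [hcaste]
        field_simp
        ring
      have hcos : Real.cos ((j:ℝ)*Real.pi/((N:ℝ)+1))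
          = - Real.cos (((N+1-j : ℕ):ℝ)*Real.pi/((N:ℝ)+1)) := by
        rw [hjk, Real.cos_pi_sub]
      have hμsq : μ^2 = a^2 - 2*a*Real.cos (((N+1-j : ℕ):ℝ)*Real.pi/((N:ℝ)+1)) + 1 := by
        have h1 : a * lam = μ^2 - a^2 - 1 := by
          rw [hlam]; field_simp
        rw [hjlam, hcos] at h1
        linarith
      have habs := Real.sqrt_sq_eq_abs μ
      rw [hμsq] at habs
      rcases abs_cases μ with ⟨h1, _⟩ | ⟨h1, _⟩
      · left
        rw [habs, h1]
      · right
        rw [habs, h1]; ring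
  · rintro (hμ | ⟨k, hk, hpm⟩)
    · rw [hμ]
      exact exists_zero N a
    · rw [Finset.mem_Icc] at hk
      have hπ := Real.pi_pos
      have hkN : (k:ℝ) < (N:ℝ)+1 := by exact_mod_cast Nat.lt_succ_of_le hk.2
      have hk0 : (0:ℝ) < (k:ℝ) := by exact_mod_cast hk.1
      have hsin : 0 < Real.sin ((k:ℝ)*Real.pi/((N:ℝ)+1)) := by
        apply Real.sin_pos_of_pos_of_lt_pi
        · positivity
        · rw [div_lt_iff₀ (by positivity)]
          nlinarith
      have ht : 0 < a^2 - 2*a*Real.cos ((k:ℝ)*Real.pi/((N:ℝ)+1)) + 1 := by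
        nlinarith [Real.sin_sq_add_cos_sq ((k:ℝ)*Real.pi/((N:ℝ)+1)),
          sq_nonneg (a - Real.cos ((k:ℝ)*Real.pi/((N:ℝ)+1)))]
      have hs := Real.sqrt_pos.2 ht
      have hsq := Real.sq_sqrt ht.le
      rcases hpm with h | h
      · exact exists_pm N hN a μ k hk.1 hk.2 (by rw [h]; linarith) (by rw [h]; linarith [hsq])
      · exact exists_pm N hN a μ k hk.1 hk.2 (by rw [h]; linarith)
          (by rw [h]; rw [neg_pow]; norm_num; linarith [hsq])
end

section
/- Let N ≥ 1, k ∈ {1,...,N}, set μ = (5 − 4cos(kπ/(N+1)))^{1/2}, s_j = sin(jπ/(N+1)) notation s_{nk} = sin(nkπ/(N+1)). Define φ_{2n} = μ s_{nk}/(2 s_k) for n = 1,...,N and φ_{2n+1} = s_{nk}/(2 s_k) − s_{(n+1)k}/s_k for n = 0,...,N. Then Σ_{n=1}^{N} φ_{2n}² = μ²(N+1)/(8 s_k²), Σ_{n=0}^{N} φ_{2n+1}² = μ²(N+1)/(8 s_k²), and the total sum equals μ²(N+1)/(4 s_k²). -/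
/-!
Write `θ = kπ/(N+1)`, so that `sin θ ≠ 0` while `sin ((N+1)θ) = 0`. The product-to-sum
formulas turn `sin² (nθ)`, `sin (nθ) sin ((n+1)θ)` and `sin² ((n+1)θ)` into a constant minus
half of `cos (2θ n + b)`, and a full period `n = 0, …, N` of these cosines sums to zero
(telescoping against `sin θ`). Hence the three sums are `(N+1)/2`, `(N+1) cos θ / 2` and
`(N+1)/2`, and expanding the squares of `φ_n` gives `μ²(N+1)/(8 s_k²)` for each parity, using
`μ² = 5 - 4 cos θ` for the odd part.
-/

open Finset Real

section PeriodSums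

variable {m : ℕ} {θ : ℝ}

lemma sum_range_cos_two_mul_add_eq_zero (hθ : sin θ ≠ 0) (hmθ : sin (m * θ) = 0) (b : ℝ) :
    ∑ i ∈ range m, cos (2 * θ * i + b) = 0 := by
  have h := sin_mul_sum_cos m (2 * θ) b
  rw [show 2 * θ / 2 = θ by ring, show (m : ℝ) * (2 * θ) / 2 = m * θ by ring, hmθ,
    zero_mul] at h
  exact (mul_eq_zero.mp h).resolve_left hθ

lemma sum_range_sub_cos_two_mul_add (hθ : sin θ ≠ 0) (hmθ : sin (m * θ) = 0) (c b : ℝ) :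
    ∑ i ∈ range m, (c - cos (2 * θ * i + b) / 2) = m * c := by
  rw [sum_sub_distrib, ← sum_div, sum_range_cos_two_mul_add_eq_zero hθ hmθ, sum_const,
    card_range, nsmul_eq_mul]
  ring

lemma sum_range_sin_mul_sq (hθ : sin θ ≠ 0) (hmθ : sin (m * θ) = 0) :
    ∑ i ∈ range m, sin (i * θ) ^ 2 = m / 2 := by
  calc ∑ i ∈ range m, sin (i * θ) ^ 2 = ∑ i ∈ range m, (1 / 2 - cos (2 * θ * i + 0) / 2) := by
        refine sum_congr rfl fun i _ => ?_
        rw [sin_sq_eq_half_sub]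
        ring_nf
    _ = m / 2 := by rw [sum_range_sub_cos_two_mul_add hθ hmθ]; ring

lemma sum_range_sin_succ_mul_sq (hθ : sin θ ≠ 0) (hmθ : sin (m * θ) = 0) :
    ∑ i ∈ range m, sin ((i + 1) * θ) ^ 2 = m / 2 := by
  calc ∑ i ∈ range m, sin ((i + 1) * θ) ^ 2
        = ∑ i ∈ range m, (1 / 2 - cos (2 * θ * i + 2 * θ) / 2) := by
        refine sum_congr rfl fun i _ => ?_
        rw [sin_sq_eq_half_sub]
        ring_nf
    _ = m / 2 := by rw [sum_range_sub_cos_two_mul_add hθ hmθ]; ring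

lemma sum_range_sin_mul_mul_sin_succ_mul (hθ : sin θ ≠ 0) (hmθ : sin (m * θ) = 0) :
    ∑ i ∈ range m, sin (i * θ) * sin ((i + 1) * θ) = m * cos θ / 2 := by
  calc ∑ i ∈ range m, sin (i * θ) * sin ((i + 1) * θ)
        = ∑ i ∈ range m, (cos θ / 2 - cos (2 * θ * i + θ) / 2) := by
        refine sum_congr rfl fun i _ => ?_
        have h := two_mul_sin_mul_sin (i * θ) ((i + 1) * θ)
        rw [show (i : ℝ) * θ - (i + 1) * θ = -θ by ring, cos_neg,
          show (i : ℝ) * θ + (i + 1) * θ = 2 * θ * i + θ by ring] at h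
        linarith
    _ = m * cos θ / 2 := by rw [sum_range_sub_cos_two_mul_add hθ hmθ]; ring

end PeriodSums

section FundamentalSolutions

variable {N : ℕ} {θ : ℝ}

lemma sum_Icc_sq_mul_sin_div_two_sin (hθ : sin θ ≠ 0) (hNθ : sin ((N + 1) * θ) = 0) (c : ℝ) :
    ∑ n ∈ Icc 1 N, (c * sin (n * θ) / (2 * sin θ)) ^ 2 = c ^ 2 * (N + 1) / (8 * sin θ ^ 2) := by
  have hsq : ∑ n ∈ Icc 1 N, sin (n * θ) ^ 2 = (N + 1) / 2 := by
    have h := sum_range_sin_mul_sq (m := N + 1) hθ (by exact_mod_cast hNθ)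
    rw [sum_range_eq_add_Ico _ N.add_one_pos, Ico_add_one_right_eq_Icc] at h
    simpa using h
  calc ∑ n ∈ Icc 1 N, (c * sin (n * θ) / (2 * sin θ)) ^ 2
        = c ^ 2 / (4 * sin θ ^ 2) * ∑ n ∈ Icc 1 N, sin (n * θ) ^ 2 := by
        rw [mul_sum]
        exact sum_congr rfl fun n _ => by ring
    _ = c ^ 2 * (N + 1) / (8 * sin θ ^ 2) := by rw [hsq]; ring

lemma sum_range_sq_sin_div_two_sin_sub_sin_succ_div_sin (hθ : sin θ ≠ 0)
    (hNθ : sin ((N + 1) * θ) = 0) :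
    ∑ n ∈ range (N + 1), (sin (n * θ) / (2 * sin θ) - sin ((n + 1) * θ) / sin θ) ^ 2
      = (5 - 4 * cos θ) * (N + 1) / (8 * sin θ ^ 2) := by
  have hNθ' : sin (((N + 1 : ℕ) : ℝ) * θ) = 0 := by exact_mod_cast hNθ
  have hexpand : ∀ n : ℕ, (sin (n * θ) / (2 * sin θ) - sin ((n + 1) * θ) / sin θ) ^ 2
      = (sin (n * θ) ^ 2 - 4 * (sin (n * θ) * sin ((n + 1) * θ))
          + 4 * sin ((n + 1) * θ) ^ 2) / (4 * sin θ ^ 2) := fun n => by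
    field_simp
    ring
  simp only [hexpand, ← sum_div, sum_add_distrib, sum_sub_distrib, ← mul_sum,
    sum_range_sin_mul_sq hθ hNθ', sum_range_sin_mul_mul_sin_succ_mul hθ hNθ',
    sum_range_sin_succ_mul_sq hθ hNθ']
  push_cast
  field_simp
  ring

end FundamentalSolutions

lemma sin_nat_mul_pi_div_succ_pos {N k : ℕ} (hk1 : 1 ≤ k) (hkN : k ≤ N) :
    0 < sin (k * π / (N + 1)) := by
  have hk : (k : ℝ) < N + 1 := by exact_mod_cast Nat.lt_succ_of_le hkN
  refine sin_pos_of_pos_of_lt_pi (by positivity) ?_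
  rw [div_lt_iff₀ (by positivity)]
  nlinarith [pi_pos]

theorem sum_of_squares_at_two_general (N k : ℕ) (hk : k ∈ Finset.Icc 1 N) :
    (∑ n ∈ Finset.Icc 1 N,
        (Real.sqrt (5 - 4*Real.cos ((k : ℝ)*Real.pi/(N+1)))
          * Real.sin ((n : ℝ)*(k : ℝ)*Real.pi/(N+1))
          / (2 * Real.sin ((k : ℝ)*Real.pi/(N+1))))^2)
      = (Real.sqrt (5 - 4*Real.cos ((k : ℝ)*Real.pi/(N+1))))^2 * (N+1)
          / (8 * (Real.sin ((k : ℝ)*Real.pi/(N+1)))^2) ∧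
    (∑ n ∈ Finset.range (N+1),
        (Real.sin ((n : ℝ)*(k : ℝ)*Real.pi/(N+1))
            / (2 * Real.sin ((k : ℝ)*Real.pi/(N+1)))
          - Real.sin (((n : ℝ)+1)*(k : ℝ)*Real.pi/(N+1))
            / Real.sin ((k : ℝ)*Real.pi/(N+1)))^2)
      = (Real.sqrt (5 - 4*Real.cos ((k : ℝ)*Real.pi/(N+1))))^2 * (N+1)
          / (8 * (Real.sin ((k : ℝ)*Real.pi/(N+1)))^2) ∧
    (∑ n ∈ Finset.Icc 1 N,
        (Real.sqrt (5 - 4*Real.cos ((k : ℝ)*Real.pi/(N+1)))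
          * Real.sin ((n : ℝ)*(k : ℝ)*Real.pi/(N+1))
          / (2 * Real.sin ((k : ℝ)*Real.pi/(N+1))))^2)
    + (∑ n ∈ Finset.range (N+1),
        (Real.sin ((n : ℝ)*(k : ℝ)*Real.pi/(N+1))
            / (2 * Real.sin ((k : ℝ)*Real.pi/(N+1)))
          - Real.sin (((n : ℝ)+1)*(k : ℝ)*Real.pi/(N+1))
            / Real.sin ((k : ℝ)*Real.pi/(N+1)))^2)
      = (Real.sqrt (5 - 4*Real.cos ((k : ℝ)*Real.pi/(N+1))))^2 * (N+1)
          / (4 * (Real.sin ((k : ℝ)*Real.pi/(N+1)))^2) := by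
  obtain ⟨hk1, hkN⟩ := Finset.mem_Icc.mp hk
  have hθ : sin (k * π / (N + 1)) ≠ 0 := (sin_nat_mul_pi_div_succ_pos hk1 hkN).ne'
  set θ : ℝ := k * π / (N + 1) with hθ_def
  have hNθ : sin ((N + 1) * θ) = 0 := by
    rw [hθ_def, mul_div_cancel₀ _ (by positivity)]
    exact sin_nat_mul_pi k
  have harg : ∀ x : ℝ, x * k * π / (N + 1) = x * θ := fun x => by rw [hθ_def]; ring
  have hμ : √(5 - 4 * cos θ) ^ 2 = 5 - 4 * cos θ := sq_sqrt (by linarith [cos_le_one θ])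
  have heven := sum_Icc_sq_mul_sin_div_two_sin hθ hNθ √(5 - 4 * cos θ)
  have hodd := sum_range_sq_sin_div_two_sin_sub_sin_succ_div_sin hθ hNθ
  rw [← hμ] at hodd
  simp only [harg]
  refine ⟨heven, hodd, ?_⟩
  rw [heven, hodd]
  ring

/-- Sums of squares of the fundamental solutions at `a = 2`, `λ = μ = (5-4c_k)^{1/2}`:
even-index part and odd-index part each equal `μ²(N+1)/(8 s_k²)`, the total being
`μ²(N+1)/(4 s_k²)`. -/
theorem sum_of_squares_at_two (N k : ℕ) (hN : 1 ≤ N) (hk : k ∈ Finset.Icc 1 N) :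
    (∑ n ∈ Finset.Icc 1 N,
        (Real.sqrt (5 - 4*Real.cos ((k : ℝ)*Real.pi/(N+1)))
          * Real.sin ((n : ℝ)*(k : ℝ)*Real.pi/(N+1))
          / (2 * Real.sin ((k : ℝ)*Real.pi/(N+1))))^2)
      = (Real.sqrt (5 - 4*Real.cos ((k : ℝ)*Real.pi/(N+1))))^2 * (N+1)
          / (8 * (Real.sin ((k : ℝ)*Real.pi/(N+1)))^2) ∧
    (∑ n ∈ Finset.range (N+1),
        (Real.sin ((n : ℝ)*(k : ℝ)*Real.pi/(N+1))
            / (2 * Real.sin ((k : ℝ)*Real.pi/(N+1)))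
          - Real.sin (((n : ℝ)+1)*(k : ℝ)*Real.pi/(N+1))
            / Real.sin ((k : ℝ)*Real.pi/(N+1)))^2)
      = (Real.sqrt (5 - 4*Real.cos ((k : ℝ)*Real.pi/(N+1))))^2 * (N+1)
          / (8 * (Real.sin ((k : ℝ)*Real.pi/(N+1)))^2) ∧
    (∑ n ∈ Finset.Icc 1 N,
        (Real.sqrt (5 - 4*Real.cos ((k : ℝ)*Real.pi/(N+1)))
          * Real.sin ((n : ℝ)*(k : ℝ)*Real.pi/(N+1))
          / (2 * Real.sin ((k : ℝ)*Real.pi/(N+1))))^2)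
    + (∑ n ∈ Finset.range (N+1),
        (Real.sin ((n : ℝ)*(k : ℝ)*Real.pi/(N+1))
            / (2 * Real.sin ((k : ℝ)*Real.pi/(N+1)))
          - Real.sin (((n : ℝ)+1)*(k : ℝ)*Real.pi/(N+1))
            / Real.sin ((k : ℝ)*Real.pi/(N+1)))^2)
      = (Real.sqrt (5 - 4*Real.cos ((k : ℝ)*Real.pi/(N+1))))^2 * (N+1)
          / (4 * (Real.sin ((k : ℝ)*Real.pi/(N+1)))^2) :=
  sum_of_squares_at_two_general N k hk
end

section
/- Let N ≥ 1 and define the alternating 2×2 transfer matrices T_k = (1/a)[[−1, −v_{2k−1}], [v_{2k}, v_{2k} v_{2k−1} − a²]] at λ = 0. If v_{2k+1} = 0 for all k = 0,...,N, then the product M = T_{N+1} T_N ⋯ T_1 has (1,2)-entry equal to 0 for every a ≠ 0; in particular 0 is an eigenvalue of the Jacobi matrix J_a with diagonal v and alternating off-diagonal entries a, 1 for every a ∈ (0,2]. -/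
/-- The nanoribbon Jacobi matrix `J_a` with diagonal `(v_1,…,v_{2N+1})` and alternating
off-diagonal entries `a,1,a,1,…,a`. -/
def Ja (N : ℕ) (a : ℝ) (v : ℕ → ℝ) : Matrix (Fin (2*N+1)) (Fin (2*N+1)) ℝ :=
  Matrix.of fun i j =>
    if i = j then v ((i : ℕ) + 1)
    else if (j : ℕ) = (i : ℕ) + 1 then (if (i : ℕ) % 2 = 0 then a else 1)
    else if (i : ℕ) = (j : ℕ) + 1 then (if (j : ℕ) % 2 = 0 then a else 1)
    else 0

/-- The transfer matrices `T_k` of the eigenvalue recursion at `λ = 0`. -/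
noncomputable def Tmat (a : ℝ) (v : ℕ → ℝ) (k : ℕ) : Matrix (Fin 2) (Fin 2) ℝ :=
  (1/a) • !![-1, -v (2*k-1); v (2*k), v (2*k) * v (2*k-1) - a^2]

lemma prod_entry01 (L : List (Matrix (Fin 2) (Fin 2) ℝ)) (h : ∀ M ∈ L, M 0 1 = 0) :
    L.prod 0 1 = 0 := by
  induction L with
  | nil => simp [Matrix.one_apply]
  | cons M L ih =>
    rw [List.prod_cons, Matrix.mul_apply, Fin.sum_univ_two,
      h M (by simp), ih (fun P hP => h P (by simp [hP]))]
    ring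

/-- If all odd diagonal entries vanish, `v_{2k+1} = 0` for `k = 0,…,N`, then the
`(1,2)`-entry of the monodromy product `T_{N+1}⋯T_1` vanishes for every `a ≠ 0`;
in particular `0` is an eigenvalue of `J_a` for every `a ∈ (0,2]`. -/
theorem flat_band_sufficiency (N : ℕ) (hN : 1 ≤ N) (v : ℕ → ℝ)
    (hodd : ∀ k ≤ N, v (2*k+1) = 0) (a : ℝ) :
    (a ≠ 0 →
      (((List.range (N+1)).map (fun j => Tmat a v (N+1-j))).prod) 0 1 = 0) ∧
    (a ∈ Set.Ioc (0:ℝ) 2 →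
      ∃ y : Fin (2*N+1) → ℝ, y ≠ 0 ∧ (Ja N a v).mulVec y = 0) := by
  constructor
  · intro _
    apply prod_entry01
    intro M hM
    simp only [List.mem_map, List.mem_range] at hM
    obtain ⟨j, hj, rfl⟩ := hM
    have hv : v (2*(N+1-j)-1) = 0 := by
      have h1 : 2*(N+1-j)-1 = 2*(N-j)+1 := by omega
      rw [h1]; exact hodd (N-j) (by omega)
    simp [Tmat, hv]
  · intro _
    refine ⟨fun i => if (i : ℕ) % 2 = 0 then (-a)^((i : ℕ)/2) else 0, ?_, ?_⟩
    · intro h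
      have := congrFun h ⟨0, by omega⟩
      simp at this
    · funext i
      rw [Matrix.mulVec, dotProduct]
      by_cases hi : (i : ℕ) % 2 = 0
      · apply Finset.sum_eq_zero
        intro j _
        by_cases hji : j = i
        · subst hji
          have hv : v ((j : ℕ) + 1) = 0 := by
            have : (j : ℕ) + 1 = 2*((j : ℕ)/2)+1 := by omega
            rw [this]; exact hodd _ (by omega)
          simp [Ja, hv]
        · by_cases hje : (j : ℕ) % 2 = 0
          · have h1 : ¬ ((j : ℕ) = (i : ℕ) + 1) := by omega
            have h2 : ¬ ((i : ℕ) = (j : ℕ) + 1) := by omega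
            have hij : ¬ (i = j) := fun h => hji h.symm
            simp [Ja, hij, h1, h2]
          · simp [hje]
      · -- i odd
        have hlt : (i : ℕ) < 2*N+1 := i.isLt
        have h1 : 1 ≤ (i : ℕ) := by omega
        have h2 : (i : ℕ) + 1 < 2*N+1 := by omega
        set m : ℕ := ((i : ℕ) - 1)/2 with hm
        have key : ∀ j : Fin (2*N+1),
            Ja N a v i j * (if (j : ℕ) % 2 = 0 then (-a)^((j : ℕ)/2) else 0)
            = (if (j : ℕ) = (i : ℕ) - 1 then a * (-a)^m else 0)
              + (if (j : ℕ) = (i : ℕ) + 1 then (-a)^(m+1) else 0) := by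
          intro j
          by_cases hc2 : (j : ℕ) = (i : ℕ) + 1
          · have hne : ¬ (i = j) := by rw [Fin.ext_iff]; omega
            rw [if_neg (show ¬ (j : ℕ) = (i : ℕ) - 1 by omega), if_pos hc2]
            simp only [Ja, Matrix.of_apply, if_neg hne, if_pos hc2, if_neg hi]
            rw [if_pos (show (j : ℕ) % 2 = 0 by omega),
              show (j : ℕ)/2 = m + 1 by omega]
            ring
          · by_cases hc1 : (j : ℕ) = (i : ℕ) - 1
            · have hne : ¬ (i = j) := by rw [Fin.ext_iff]; omega
              rw [if_pos hc1, if_neg hc2]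
              simp only [Ja, Matrix.of_apply, if_neg hne, if_neg hc2,
                if_pos (show (i : ℕ) = (j : ℕ) + 1 by omega),
                if_pos (show (j : ℕ) % 2 = 0 by omega)]
              rw [show (j : ℕ)/2 = m by omega]
              ring
            · rw [if_neg hc1, if_neg hc2]
              by_cases hje : (j : ℕ) % 2 = 0
              · have hne : ¬ (i = j) := by rw [Fin.ext_iff]; omega
                simp only [Ja, Matrix.of_apply, if_neg hne, if_neg hc2,
                  if_neg (show ¬ (i : ℕ) = (j : ℕ) + 1 by omega)]
                ring
              · rw [if_neg hje]
                ring
        rw [Finset.sum_congr rfl (fun j _ => key j), Finset.sum_add_distrib]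
        have e1 : ∀ j : Fin (2*N+1), ((j : ℕ) = (i : ℕ) - 1) = (j = ⟨(i : ℕ) - 1, by omega⟩) := by
          intro j; rw [Fin.ext_iff]
        have e2 : ∀ j : Fin (2*N+1), ((j : ℕ) = (i : ℕ) + 1) = (j = ⟨(i : ℕ) + 1, by omega⟩) := by
          intro j; rw [Fin.ext_iff]
        simp only [e1, e2]
        rw [Finset.sum_ite_eq' Finset.univ, Finset.sum_ite_eq' Finset.univ]
        simp [pow_succ]
        ring
end

section
/- Let N ≥ 1, p = 2N+1 and J_a be the p×p tridiagonal matrix with diagonal (v_1,...,v_p) and alternating off-diagonal entries a,1,a,1,...,a. If λ = v_1 is an eigenvalue of J_a for infinitely many a ∈ (0,2], then v_{2k+1} = v_1 for all k = 1,...,N. -/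
open Matrix Polynomial

/-- The vector `(y_1, …, y_n)` in the paper's `1`-based indexing, padded with the Dirichlet
values `y_0 = 0` and `y_j = 0` for `j > n`. -/
def dirichletPad {n : ℕ} (y : Fin n → ℝ) : ℕ → ℝ
  | 0 => 0
  | j + 1 => if h : j < n then y ⟨j, h⟩ else 0

section dirichletPad

variable {n : ℕ} (y : Fin n → ℝ)

@[simp]
theorem dirichletPad_zero : dirichletPad y 0 = 0 := rfl

@[simp]
theorem dirichletPad_val_add_one (j : Fin n) : dirichletPad y (j + 1) = y j := by
  simp [dirichletPad]

theorem dirichletPad_add_one_of_le {j : ℕ} (hj : n ≤ j) : dirichletPad y (j + 1) = 0 := by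
  simp [dirichletPad, hj]

theorem sum_ite_val_add_one_eq (c : ℝ) (m : ℕ) :
    ∑ j : Fin n, (if (j : ℕ) + 1 = m then c * y j else 0) = c * dirichletPad y m := by
  cases m with
  | zero => simp
  | succ m =>
    rcases lt_or_ge m n with hm | hm
    · rw [Finset.sum_eq_single ⟨m, hm⟩ (by intro j _ hj; simp [Fin.ext_iff] at hj ⊢; omega)
        (by simp)]
      simp [dirichletPad, hm]
    · rw [dirichletPad_add_one_of_le y hm, mul_zero]
      exact Finset.sum_eq_zero fun j _ => if_neg (by omega)

end dirichletPad

/-- The polynomial `Z_j` with `a ^ ⌊j/2⌋ * y_j = Z_j(a) * y_1` along solutions of the rows of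
`J_a - μ`, where `d n = v n - μ`. -/
noncomputable def transferPoly (d : ℕ → ℝ) : ℕ → ℝ[X]
  | 0 => 0
  | 1 => 1
  | i + 2 => -((if i % 2 = 0 then 1 else X ^ 2) * transferPoly d i
      + C (d (i + 1)) * transferPoly d (i + 1))

namespace transferPoly

variable (d : ℕ → ℝ)

theorem two_mul_add_two (k : ℕ) :
    transferPoly d (2 * k + 2) =
      -(transferPoly d (2 * k) + C (d (2 * k + 1)) * transferPoly d (2 * k + 1)) := by
  rw [transferPoly, if_pos (by omega), one_mul]

theorem two_mul_add_three (k : ℕ) :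
    transferPoly d (2 * k + 3) =
      -(X ^ 2 * transferPoly d (2 * k + 1) + C (d (2 * k + 2)) * transferPoly d (2 * k + 2)) := by
  rw [transferPoly, if_neg (by omega)]

theorem natDegree_le_two_mul (k : ℕ) :
    (transferPoly d (2 * k + 1)).natDegree ≤ 2 * k ∧
      (transferPoly d (2 * k + 2)).natDegree ≤ 2 * k := by
  induction k with
  | zero => simp [transferPoly]
  | succ k ih =>
    have h_odd : (transferPoly d (2 * k + 3)).natDegree ≤ 2 * k + 2 := by
      rw [two_mul_add_three, natDegree_neg]
      refine natDegree_add_le_of_degree_le ?_ ?_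
      · exact natDegree_mul_le.trans (by rw [natDegree_X_pow]; omega)
      · exact (natDegree_C_mul_le _ _).trans (by omega)
    refine ⟨h_odd, ?_⟩
    rw [two_mul_add_two, natDegree_neg, show 2 * (k + 1) = 2 * k + 2 by ring]
    exact natDegree_add_le_of_degree_le (by omega) ((natDegree_C_mul_le _ _).trans h_odd)

theorem coeff_two_mul_add_one (k : ℕ) : (transferPoly d (2 * k + 1)).coeff (2 * k) = (-1) ^ k := by
  induction k with
  | zero => simp [transferPoly]
  | succ k ih =>
    rw [show 2 * (k + 1) + 1 = 2 * k + 3 by ring, two_mul_add_three, coeff_neg, coeff_add,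
      coeff_C_mul, show 2 * (k + 1) = 2 * k + 2 by ring, coeff_X_pow_mul, ih,
      coeff_eq_zero_of_natDegree_lt ((natDegree_le_two_mul d k).2.trans_lt (by omega))]
    ring

theorem odd_eq_zero_of_eq_zero (n : ℕ) (h : transferPoly d (2 * n + 2) = 0) :
    ∀ k ≤ n, d (2 * k + 1) = 0 := by
  induction n with
  | zero =>
    intro k hk
    obtain rfl : k = 0 := by omega
    simpa [transferPoly] using h
  | succ n ih =>
    rw [two_mul_add_two, neg_eq_zero, show 2 * (n + 1) = 2 * n + 2 by ring] at h
    have hd : d (2 * n + 3) = 0 := by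
      have hc := congrArg (coeff · (2 * n + 2)) h
      simp only [coeff_add, coeff_C_mul, coeff_zero] at hc
      have hlead : (transferPoly d (2 * n + 3)).coeff (2 * n + 2) = (-1) ^ (n + 1) :=
        coeff_two_mul_add_one d (n + 1)
      rw [coeff_eq_zero_of_natDegree_lt ((natDegree_le_two_mul d n).2.trans_lt (by omega)),
        hlead] at hc
      simpa using hc
    rw [hd, map_zero, zero_mul, add_zero] at h
    intro k hk
    rcases Nat.lt_or_ge k (n + 1) with hlt | hge
    · exact ih h k (by omega)
    · obtain rfl : k = n + 1 := by omega
      exact hd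

end transferPoly

theorem pow_mul_eq_eval_transferPoly_mul (d : ℕ → ℝ) (a : ℝ) (u : ℕ → ℝ) (n : ℕ) (h0 : u 0 = 0)
    (hodd : ∀ k < n, a * u (2 * k + 1) + d (2 * k + 2) * u (2 * k + 2) + u (2 * k + 3) = 0)
    (heven : ∀ k ≤ n, u (2 * k) + d (2 * k + 1) * u (2 * k + 1) + a * u (2 * k + 2) = 0) :
    ∀ k ≤ n, a ^ k * u (2 * k + 1) = (transferPoly d (2 * k + 1)).eval a * u 1 ∧
      a ^ (k + 1) * u (2 * k + 2) = (transferPoly d (2 * k + 2)).eval a * u 1 := by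
  intro k hk
  induction k with
  | zero =>
    have h := heven 0 hk
    simp only [mul_zero, zero_add, h0] at h
    simp only [transferPoly, pow_zero, pow_one, mul_zero, zero_add, one_mul, mul_one, eval_one,
      eval_neg, eval_C, neg_mul, Nat.zero_mod, ↓reduceIte, true_and]
    linear_combination h
  | succ k ih =>
    obtain ⟨ih_odd, ih_even⟩ := ih (by omega)
    have h_odd : a ^ (k + 1) * u (2 * k + 3) = (transferPoly d (2 * k + 3)).eval a * u 1 := by
      simp only [transferPoly.two_mul_add_three, eval_neg, eval_add, eval_mul, eval_pow, eval_X,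
        eval_C]
      linear_combination a ^ (k + 1) * hodd k (by omega) - a ^ 2 * ih_odd - d (2 * k + 2) * ih_even
    have h_even : a ^ (k + 2) * u (2 * k + 4) = (transferPoly d (2 * k + 4)).eval a * u 1 := by
      have hrow : u (2 * k + 2) + d (2 * k + 3) * u (2 * k + 3) + a * u (2 * k + 4) = 0 :=
        heven (k + 1) hk
      rw [show transferPoly d (2 * k + 4) = _ from transferPoly.two_mul_add_two d (k + 1)]
      simp only [eval_neg, eval_add, eval_mul, eval_C]
      linear_combination a ^ (k + 1) * hrow - ih_even - d (2 * k + 3) * h_odd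
    exact ⟨h_odd, h_even⟩

/-- The `n`-th off-diagonal entry of `J_a`, counting from `1`. -/
def hopping (a : ℝ) (n : ℕ) : ℝ := if n % 2 = 1 then a else 1

theorem hopping_two_mul (a : ℝ) (k : ℕ) : hopping a (2 * k) = 1 := by
  simp [hopping]

theorem hopping_two_mul_add_one (a : ℝ) (k : ℕ) : hopping a (2 * k + 1) = a := by
  simp [hopping, Nat.add_mod]

section Ja

variable {N : ℕ} {a : ℝ} {v : ℕ → ℝ}

theorem Ja_mul_apply (y : Fin (2 * N + 1) → ℝ) (i j : Fin (2 * N + 1)) :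
    Ja N a v i j * y j =
      (if (j : ℕ) + 1 = i then hopping a i * y j else 0)
      + (if (j : ℕ) + 1 = i + 1 then v (i + 1) * y j else 0)
      + (if (j : ℕ) + 1 = i + 2 then hopping a (i + 1) * y j else 0) := by
  simp only [Ja, Matrix.of_apply, hopping, Fin.ext_iff]
  split_ifs <;> first | omega | ring

theorem Ja_mulVec_apply (y : Fin (2 * N + 1) → ℝ) (i : Fin (2 * N + 1)) :
    (Ja N a v *ᵥ y) i = hopping a i * dirichletPad y i + v (i + 1) * dirichletPad y (i + 1)
      + hopping a (i + 1) * dirichletPad y (i + 2) := by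
  simp only [mulVec, dotProduct, Ja_mul_apply, Finset.sum_add_distrib, sum_ite_val_add_one_eq]

theorem eval_transferPoly_eq_zero_of_mulVec_eq (ha : a ≠ 0) {y : Fin (2 * N + 1) → ℝ}
    (hy : y ≠ 0) {μ : ℝ} (h : Ja N a v *ᵥ y = μ • y) :
    (transferPoly (fun n => v n - μ) (2 * N + 2)).eval a = 0 := by
  set u := dirichletPad y
  have hrow : ∀ i ≤ 2 * N,
      hopping a i * u i + (v (i + 1) - μ) * u (i + 1) + hopping a (i + 1) * u (i + 2) = 0 := by
    intro i hi
    have hi' := congrFun h ⟨i, by omega⟩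
    rw [Ja_mulVec_apply, Pi.smul_apply, smul_eq_mul, ← dirichletPad_val_add_one y] at hi'
    linear_combination hi'
  have htransfer := pow_mul_eq_eval_transferPoly_mul (fun n => v n - μ) a u N rfl
    (fun k hk => by
      have hr := hrow (2 * k + 1) (by omega)
      rwa [hopping_two_mul_add_one, show 2 * k + 1 + 1 = 2 * (k + 1) by ring, hopping_two_mul,
        one_mul] at hr)
    (fun k hk => by
      have hr := hrow (2 * k) (by omega)
      rwa [hopping_two_mul, hopping_two_mul_add_one, one_mul] at hr)
  have hu1 : u 1 ≠ 0 := by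
    intro hu1
    apply hy
    funext j
    rw [Pi.zero_apply, ← dirichletPad_val_add_one y]
    obtain ⟨k, hk | hk⟩ := Nat.even_or_odd' j
    · have hk' := (htransfer k (by omega)).1
      rw [hu1, mul_zero] at hk'
      simpa [hk, ha] using hk'
    · have hk' := (htransfer k (by omega)).2
      rw [hu1, mul_zero] at hk'
      simpa [hk, ha] using hk'
  have hlast := (htransfer N le_rfl).2
  rw [show u (2 * N + 2) = 0 from dirichletPad_add_one_of_le y le_rfl, mul_zero] at hlast
  exact (mul_eq_zero.1 hlast.symm).resolve_right hu1

theorem Ja_odd_diag_eq_of_infinite_eigenvalue (μ : ℝ)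
    (h : {a : ℝ | a ≠ 0 ∧ ∃ y : Fin (2 * N + 1) → ℝ, y ≠ 0 ∧ Ja N a v *ᵥ y = μ • y}.Infinite) :
    ∀ k ≤ N, v (2 * k + 1) = μ := by
  have hZ : transferPoly (fun n => v n - μ) (2 * N + 2) = 0 :=
    eq_zero_of_infinite_isRoot _ <| h.mono <| by
      rintro a ⟨ha, y, hy, hμ⟩
      exact eval_transferPoly_eq_zero_of_mulVec_eq ha hy hμ
  exact fun k hk => sub_eq_zero.1 (transferPoly.odd_eq_zero_of_eq_zero _ N hZ k hk)

end Ja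

theorem flat_band_necessity_general (N : ℕ) (v : ℕ → ℝ)
    (h : {a : ℝ | a ∈ Set.Ioc (0:ℝ) 2 ∧
        ∃ y : Fin (2*N+1) → ℝ, y ≠ 0 ∧ (Ja N a v).mulVec y = v 1 • y}.Infinite) :
    ∀ k ∈ Finset.Icc 1 N, v (2*k+1) = v 1 := by
  intro k hk
  refine Ja_odd_diag_eq_of_infinite_eigenvalue (v 1) (h.mono ?_) k (Finset.mem_Icc.1 hk).2
  rintro a ⟨ha, hy⟩
  exact ⟨ha.1.ne', hy⟩

/-- Necessity for the flat band: if `λ = v_1` is an eigenvalue of `J_a` for infinitely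
many `a ∈ (0,2]`, then all odd diagonal entries are equal to `v_1`. -/
theorem flat_band_necessity (N : ℕ) (hN : 1 ≤ N) (v : ℕ → ℝ)
    (h : {a : ℝ | a ∈ Set.Ioc (0:ℝ) 2 ∧
        ∃ y : Fin (2*N+1) → ℝ, y ≠ 0 ∧ (Ja N a v).mulVec y = v 1 • y}.Infinite) :
    ∀ k ∈ Finset.Icc 1 N, v (2*k+1) = v 1 :=
  flat_band_necessity_general N v h
end

section
/- Fix N ≥ 1. Let S be the shift on ℓ²(ℤ), (S h)_n = h_{n+1}. Let H = Δ (the nanoribbon Laplacian with Dirichlet boundary, p = 2N+1 rows). Then f ∈ ℓ²(Γ) satisfies Hf = 0 if and only if there exists h ∈ ℓ²(ℤ) such that (f_{n,2k+1})_{n∈ℤ} = (−I − S)^k h for k = 0,...,N and (f_{n,2k})_{n∈ℤ} = 0 for k = 1,...,N. -/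
set_option maxHeartbeats 1000000


/-- The operator `(-I - S)` on sequences, `(Th) n = -h n - h (n+1)`. -/
def negIS : (ℤ → ℝ) → (ℤ → ℝ) := fun u n => -u n - u (n+1)

/-- Characterization of the kernel of the nanoribbon Laplacian (flat band at `0`):
`f ∈ ℓ²(Γ)` satisfies `Δf = 0` iff the even rows vanish and the odd rows are
`(f_{·,2k+1}) = (-I-S)^k h` for some `h ∈ ℓ²(ℤ)`. -/
theorem flat_band_eigenspace (N : ℕ) (hN : 1 ≤ N) (f : ℤ → ℕ → ℝ)
    (hsupp : ∀ (n : ℤ) (k : ℕ), (k = 0 ∨ 2*N+1 < k) → f n k = 0)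
    (hl2 : Summable fun x : ℤ × ℕ => (f x.1 x.2)^2) :
    ((∀ n : ℤ, ∀ k ≤ N, f n (2*k) + f (n-1) (2*k+2) + f n (2*k+2) = 0) ∧
     (∀ n : ℤ, ∀ k : ℕ, 1 ≤ k → k ≤ N →
        f n (2*k-1) + f (n+1) (2*k-1) + f n (2*k+1) = 0)) ↔
    (∃ h : ℤ → ℝ, Summable (fun n => (h n)^2) ∧
      (∀ k ≤ N, ∀ n : ℤ, f n (2*k+1) = negIS^[k] h n) ∧
      (∀ k : ℕ, 1 ≤ k → k ≤ N → ∀ n : ℤ, f n (2*k) = 0)) := by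
  constructor
  · rintro ⟨h1, h2⟩
    refine ⟨fun n => f n 1, ?_, ?_, ?_⟩
    · have h2 : Summable ((fun x : ℤ × ℕ => (f x.1 x.2)^2) ∘
          (fun n : ℤ => ((n, 1) : ℤ × ℕ))) :=
        hl2.comp_injective (fun a b hab => by simpa using hab)
      exact h2
    · intro k hk
      induction k with
      | zero => intro n; simp
      | succ k ih =>
        intro n
        have hk' : k ≤ N := Nat.le_of_succ_le hk
        have e2 := h2 n (k+1) (by omega) hk
        have hidx : 2*(k+1)-1 = 2*k+1 := by omega
        rw [hidx] at e2
        have hit : negIS^[k+1] (fun n => f n 1) n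
            = -(negIS^[k] (fun n => f n 1) n) - negIS^[k] (fun n => f n 1) (n+1) := by
          rw [Function.iterate_succ_apply']
          rfl
        rw [hit, ← ih hk' n, ← ih hk' (n+1)]
        linarith
    · -- even rows vanish, downward induction
      have key : ∀ j, j ≤ N → ∀ n, f n (2*(N-j)+2) = 0 := by
        intro j
        induction j with
        | zero =>
          intro _ n
          exact hsupp n (2*(N-0)+2) (Or.inr (by omega))
        | succ j ih =>
          intro hj n
          have hj' : j ≤ N := Nat.le_of_succ_le hj
          have e1 := h1 n (N-j) (by omega)
          have := ih hj' n
          have := ih hj' (n-1)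
          have hidx : 2*(N-(j+1))+2 = 2*(N-j) := by omega
          rw [hidx]
          linarith
      intro k hk1 hk2 n
      have hj : N - (N-k+1) ≤ N := by omega
      have hidx : 2*(N-(N-k+1))+2 = 2*k := by omega
      have := key (N-k+1) (by omega) n
      rwa [hidx] at this
  · rintro ⟨h, hs, hodd, heven⟩
    constructor
    · intro n k hk
      rcases Nat.eq_or_lt_of_le hk with rfl | hlt
      · have ha : f n (2*k) = 0 := by
          rcases Nat.eq_zero_or_pos k with rfl | hk0
          · exact hsupp n 0 (Or.inl rfl)
          · exact heven k hk0 le_rfl n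
        have hb : f (n-1) (2*k+2) = 0 := hsupp _ _ (Or.inr (by omega))
        have hc : f n (2*k+2) = 0 := hsupp _ _ (Or.inr (by omega))
        rw [ha, hb, hc]; ring
      · have ha : f n (2*k) = 0 := by
          rcases Nat.eq_zero_or_pos k with rfl | hk0
          · exact hsupp n 0 (Or.inl rfl)
          · exact heven k hk0 hk n
        have hidx : 2*k+2 = 2*(k+1) := by ring
        have hb : f (n-1) (2*k+2) = 0 := by rw [hidx]; exact heven (k+1) (by omega) hlt _
        have hc : f n (2*k+2) = 0 := by rw [hidx]; exact heven (k+1) (by omega) hlt _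
        rw [ha, hb, hc]; ring
    · intro n k hk1 hk2
      have hidx : 2*k-1 = 2*(k-1)+1 := by omega
      have hidx2 : 2*k+1 = 2*(k-1)+1+2 := by omega
      have hk1' : k - 1 ≤ N := by omega
      have e1 := hodd (k-1) hk1' n
      have e2 := hodd (k-1) hk1' (n+1)
      have e3 := hodd k hk2 n
      have hks : k = (k-1)+1 := by omega
      have hit : negIS^[k] h n
          = -(negIS^[k-1] h n) - negIS^[k-1] h (n+1) := by
        rw [hks, Function.iterate_succ_apply']
        rfl
      rw [hidx, e1, e2, e3, hit]
      ring
end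

section
/- Let N ≥ 1 and S be the shift on ℓ²(ℤ). For m ∈ ℤ define ψ^m ∈ ℓ²(ℤ×{1,...,2N+1}) by ψ^m_{·,2k} = 0 and ψ^m_{·,2k+1} = (−I−S)^k e_m where e_m is the standard basis vector. Then every f in the kernel of the nanoribbon Laplacian Δ satisfies f = Σ_{m∈ℤ} f_{m,1} ψ^m, and the map f ↦ (f_{m,1})_{m∈ℤ} is a linear isomorphism from ker Δ ∩ ℓ²(Γ) onto ℓ²(ℤ). -/
/-- The standard basis vector `e_m ∈ ℓ²(ℤ)`. -/
def stdBasis (m : ℤ) : ℤ → ℝ := fun n => if n = m then 1 else 0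

/-- The compactly supported flat-band eigenfunctions `ψ^m`:
`ψ^m_{·,2k} = 0`, `ψ^m_{·,2k+1} = (-I-S)^k e_m`. -/
def psiFun (N : ℕ) (m : ℤ) : ℤ → ℕ → ℝ := fun n k =>
  if k % 2 = 1 ∧ k ≤ 2*N+1 then negIS^[k/2] (stdBasis m) n else 0

/-- Membership in the kernel of the nanoribbon Laplacian within `ℓ²(Γ)`. -/
def InKerDelta (N : ℕ) (f : ℤ → ℕ → ℝ) : Prop :=
  (∀ (n : ℤ) (k : ℕ), (k = 0 ∨ 2*N+1 < k) → f n k = 0) ∧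
  (Summable fun x : ℤ × ℕ => (f x.1 x.2)^2) ∧
  (∀ n : ℤ, ∀ k ≤ N, f n (2*k) + f (n-1) (2*k+2) + f n (2*k+2) = 0) ∧
  (∀ n : ℤ, ∀ k : ℕ, 1 ≤ k → k ≤ N →
    f n (2*k-1) + f (n+1) (2*k-1) + f n (2*k+1) = 0)

/-!
An eigenfunction at `0` vanishes on the even rows: row `2k+2` satisfies `g (n-1) + g n = 0`
once row `2k` vanishes, so `|g|` is constant, and a constant square-summable sequence on `ℤ`
is zero. On the odd rows the equations say row `2k+1` is `(-I-S)^k` applied to row `1`, so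
`f` is determined by its first row `h`, and conversely every `h ∈ ℓ²(ℤ)` extends this way,
since `-I-S` preserves `ℓ²(ℤ)`. The expansion in the `ψ^m` holds because `(-I-S)^k` is linear
and `((-I-S)^k u) n` only depends on `u` on `[n, n+k]`, so the series is a finite sum.
-/

open Finset

def negISLinear : Module.End ℝ (ℤ → ℝ) where
  toFun := negIS
  map_add' u v := by funext n; simp only [negIS, Pi.add_apply]; ring
  map_smul' c u := by
    funext n; simp only [negIS, Pi.smul_apply, smul_eq_mul, RingHom.id_apply]; ring

lemma negISLinear_pow_apply (j : ℕ) (u : ℤ → ℝ) : (negISLinear ^ j) u = negIS^[j] u :=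
  Module.End.pow_apply _ _ _

lemma negIS_iterate_congr (j : ℕ) {u v : ℤ → ℝ} {n : ℤ}
    (h : ∀ i ∈ Icc n (n + j), u i = v i) : negIS^[j] u n = negIS^[j] v n := by
  induction j generalizing u v with
  | zero => simpa using h n (by simp)
  | succ j ih =>
    rw [Function.iterate_succ_apply, Function.iterate_succ_apply]
    refine ih fun i hi => ?_
    simp only [mem_Icc] at h hi
    simp only [negIS, h i ⟨hi.1, by omega⟩, h (i + 1) ⟨by omega, by omega⟩]

lemma negIS_iterate_stdBasis_eq_zero {j : ℕ} {m n : ℤ} (hm : m ∉ Icc n (n + j)) :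
    negIS^[j] (stdBasis m) n = 0 := by
  have hzero : negIS^[j] 0 = 0 := by
    rw [← negISLinear_pow_apply, map_zero]
  rw [negIS_iterate_congr j (v := 0), hzero, Pi.zero_apply]
  intro i hi
  simp only [stdBasis, Pi.zero_apply, ite_eq_right_iff]
  rintro rfl
  exact absurd hi hm

lemma negIS_iterate_eq_tsum (j : ℕ) (u : ℤ → ℝ) (n : ℤ) :
    negIS^[j] u n = ∑' m, u m * negIS^[j] (stdBasis m) n := by
  have hlocal : negIS^[j] u n = negIS^[j] (∑ m ∈ Icc n (n + j), u m • stdBasis m) n := by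
    refine negIS_iterate_congr j fun i hi => ?_
    simp [stdBasis, hi]
  rw [tsum_eq_sum fun m hm => by rw [negIS_iterate_stdBasis_eq_zero hm, mul_zero], hlocal,
    ← negISLinear_pow_apply, map_sum]
  simp only [map_smul, Finset.sum_apply, Pi.smul_apply, smul_eq_mul, negISLinear_pow_apply]

lemma summable_sq_negIS {u : ℤ → ℝ} (hu : Summable fun n => u n ^ 2) :
    Summable fun n => negIS u n ^ 2 := by
  have hshift : Summable fun n : ℤ => u (n + 1) ^ 2 := hu.comp_injective (add_left_injective 1)
  refine .of_nonneg_of_le (fun n => sq_nonneg _) (fun n => ?_)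
    ((hu.mul_left 2).add (hshift.mul_left 2))
  simp only [negIS]
  nlinarith [sq_nonneg (u n - u (n + 1))]

lemma summable_sq_negIS_iterate (j : ℕ) {u : ℤ → ℝ} (hu : Summable fun n => u n ^ 2) :
    Summable fun n => negIS^[j] u n ^ 2 := by
  induction j with
  | zero => exact hu
  | succ j ih => simpa only [Function.iterate_succ_apply'] using summable_sq_negIS ih

lemma eq_zero_of_summable_sq_of_add_eq_zero {g : ℤ → ℝ} (hg : Summable fun n => g n ^ 2)
    (hadd : ∀ n, g n + g (n + 1) = 0) : g = 0 := by
  have hconst : ∀ n, g n ^ 2 = g 0 ^ 2 := by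
    intro n
    induction n using Int.induction_on with
    | zero => rfl
    | succ i ih => rw [← ih, eq_neg_of_add_eq_zero_right (hadd i), neg_sq]
    | pred i ih => rw [← ih, eq_neg_of_add_eq_zero_left (hadd (-i - 1)), neg_sq, sub_add_cancel]
  simp only [hconst, summable_const_iff] at hg
  funext n
  exact pow_eq_zero_iff (n := 2) two_ne_zero |>.mp ((hconst n).trans hg)

lemma summable_of_summable_rows {α β : Type*} {f : α × β → ℝ} (hf : 0 ≤ f) (s : Finset β)
    (hrow : ∀ b, Summable fun a => f (a, b)) (hs : ∀ a, ∀ b ∉ s, f (a, b) = 0) :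
    Summable f := by
  rw [← (Equiv.prodComm β α).summable_iff,
    summable_prod_of_nonneg (f := f ∘ Equiv.prodComm β α) fun _ => hf _]
  refine ⟨hrow, summable_of_ne_finset_zero (s := s) fun b hb => ?_⟩
  simp [hs _ b hb]

def flatBandOf (N : ℕ) (h : ℤ → ℝ) : ℤ → ℕ → ℝ := fun n k =>
  if k % 2 = 1 ∧ k ≤ 2*N+1 then negIS^[k/2] h n else 0

lemma psiFun_eq_flatBandOf (N : ℕ) (m : ℤ) : psiFun N m = flatBandOf N (stdBasis m) := rfl

section flatBandOf

variable {N : ℕ} {h : ℤ → ℝ}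

lemma flatBandOf_odd {j : ℕ} (hj : j ≤ N) (n : ℤ) :
    flatBandOf N h n (2*j+1) = negIS^[j] h n := by
  rw [flatBandOf, if_pos (by omega), show (2*j+1)/2 = j by omega]

lemma flatBandOf_one (n : ℤ) : flatBandOf N h n 1 = h n :=
  flatBandOf_odd (j := 0) (Nat.zero_le N) n

lemma flatBandOf_eq_zero {k : ℕ} (hk : ¬(k % 2 = 1 ∧ k ≤ 2*N+1)) (n : ℤ) :
    flatBandOf N h n k = 0 :=
  if_neg hk

lemma flatBandOf_eq_tsum (n : ℤ) (k : ℕ) :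
    flatBandOf N h n k = ∑' m, h m * flatBandOf N (stdBasis m) n k := by
  by_cases hk : k % 2 = 1 ∧ k ≤ 2*N+1
  · simp only [flatBandOf, if_pos hk]
    exact negIS_iterate_eq_tsum _ h n
  · simp [flatBandOf_eq_zero hk]

lemma inKerDelta_flatBandOf (hh : Summable fun n => h n ^ 2) : InKerDelta N (flatBandOf N h) := by
  refine ⟨fun n k hk => flatBandOf_eq_zero (by omega) n, ?_, fun n k _ => ?_,
    fun n k hk hkN => ?_⟩
  · have hrow (k : ℕ) : Summable fun n => flatBandOf N h n k ^ 2 := by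
      by_cases hk : k % 2 = 1 ∧ k ≤ 2*N+1
      · simpa only [flatBandOf, if_pos hk] using summable_sq_negIS_iterate (k/2) hh
      · simp [flatBandOf_eq_zero hk, summable_zero]
    have htop (n : ℤ) (k : ℕ) (hk : k ∉ range (2*N+2)) : flatBandOf N h n k ^ 2 = 0 := by
      rw [flatBandOf_eq_zero (by simp only [mem_range] at hk; omega), sq, mul_zero]
    exact summable_of_summable_rows (fun _ => sq_nonneg _) _ hrow htop
  · have hzero (i : ℕ) (m : ℤ) : flatBandOf N h m (2*i) = 0 := flatBandOf_eq_zero (by omega) m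
    simp only [show 2*k+2 = 2*(k+1) by ring, hzero, add_zero]
  · obtain ⟨j, rfl⟩ : ∃ j, k = j + 1 := ⟨k - 1, by omega⟩
    rw [show 2*(j+1)-1 = 2*j+1 by omega, flatBandOf_odd (by omega), flatBandOf_odd (by omega),
      flatBandOf_odd hkN, Function.iterate_succ_apply']
    simp only [negIS]
    ring

end flatBandOf

namespace InKerDelta

variable {N : ℕ} {f : ℤ → ℕ → ℝ}

lemma even_row_eq_zero (hf : InKerDelta N f) (k : ℕ) (n : ℤ) : f n (2*k) = 0 := by
  obtain ⟨hbdry, hsum, heven, -⟩ := hf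
  induction k generalizing n with
  | zero => exact hbdry n 0 (.inl rfl)
  | succ k ih =>
    by_cases hk : N < k + 1
    · exact hbdry n _ (.inr (by omega))
    have hrow : (fun n => f n (2*k+2)) = 0 := by
      have hsum_row : Summable fun n => f n (2*k+2) ^ 2 :=
        (hsum.comp_injective (Prod.mk_left_injective (2*k+2)) :)
      refine eq_zero_of_summable_sq_of_add_eq_zero hsum_row fun n => ?_
      have hrel := heven (n + 1) k (by omega)
      rwa [ih, zero_add, add_sub_cancel_right] at hrel
    rw [mul_add_one]
    exact congrFun hrow n

lemma odd_row (hf : InKerDelta N f) {j : ℕ} (hj : j ≤ N) (n : ℤ) :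
    f n (2*j+1) = negIS^[j] (fun m => f m 1) n := by
  obtain ⟨-, -, -, hodd⟩ := hf
  induction j generalizing n with
  | zero => rfl
  | succ j ih =>
    have hrel := hodd n (j+1) (by omega) hj
    rw [show 2*(j+1)-1 = 2*j+1 by omega, ih (by omega), ih (by omega)] at hrel
    rw [Function.iterate_succ_apply', negIS]
    linarith

lemma eq_flatBandOf (hf : InKerDelta N f) : f = flatBandOf N (fun m => f m 1) := by
  funext n k
  by_cases hk : k % 2 = 1 ∧ k ≤ 2*N+1
  · obtain ⟨j, rfl⟩ : ∃ j, k = 2*j+1 := ⟨k/2, by omega⟩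
    rw [hf.odd_row (by omega), flatBandOf_odd (by omega)]
  · rw [flatBandOf_eq_zero hk]
    by_cases hodd : k % 2 = 1
    · exact hf.1 n k (.inr (by omega))
    · simpa [show 2*(k/2) = k by omega] using hf.even_row_eq_zero (k/2) n

end InKerDelta

theorem flat_band_basis_general (N : ℕ) :
    (∀ f : ℤ → ℕ → ℝ, InKerDelta N f →
      ∀ (n : ℤ) (k : ℕ), f n k = ∑' m : ℤ, f m 1 * psiFun N m n k) ∧
    (∀ h : ℤ → ℝ, Summable (fun n => (h n)^2) →
      ∃! f : ℤ → ℕ → ℝ, InKerDelta N f ∧ ∀ m : ℤ, f m 1 = h m) := by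
  refine ⟨fun f hf n k => ?_, fun h hh => ?_⟩
  · conv_lhs => rw [hf.eq_flatBandOf]
    simpa only [psiFun_eq_flatBandOf] using flatBandOf_eq_tsum n k
  · refine ⟨flatBandOf N h, ⟨inKerDelta_flatBandOf hh, flatBandOf_one⟩, ?_⟩
    rintro f ⟨hf, hf1⟩
    rw [hf.eq_flatBandOf, funext hf1]

/-- Every flat-band eigenfunction `f` expands as `f = Σ_m f_{m,1} ψ^m`, and
`f ↦ (f_{m,1})_m` is a linear isomorphism from `ker Δ ∩ ℓ²(Γ)` onto `ℓ²(ℤ)`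
(bijectivity: each `h ∈ ℓ²(ℤ)` corresponds to a unique such `f`). -/
theorem flat_band_basis (N : ℕ) (hN : 1 ≤ N) :
    (∀ f : ℤ → ℕ → ℝ, InKerDelta N f →
      ∀ (n : ℤ) (k : ℕ), f n k = ∑' m : ℤ, f m 1 * psiFun N m n k) ∧
    (∀ h : ℤ → ℝ, Summable (fun n => (h n)^2) →
      ∃! f : ℤ → ℕ → ℝ, InKerDelta N f ∧ ∀ m : ℤ, f m 1 = h m) :=
  flat_band_basis_general N
end

section
/- For any integer r ≥ 2 (more generally real r > 1) and integer 1 ≤ k < r, the function x ↦ −(x^k − 1)/(x^r − 1) is strictly increasing on (0, ∞) (extended continuously at x = 1 by value −k/r). -/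
/-!
With `y = x ^ r` and `s = k / r ∈ (0, 1)` the ratio `(x ^ k - 1) / (x ^ r - 1)` becomes
`(y ^ s - 1) / (y - 1)`, the slope of the chord from `1` to `y` of the strictly concave function
`y ↦ y ^ s`, which strictly decreases in `y`. At `y = 1` the value `s` is the derivative, and
Bernoulli's inequality `y ^ s < 1 + s (y - 1)` puts it strictly between the chord slopes on
either side.
-/

open Set

namespace Real

theorem rpow_sub_one_div_sub_one_lt {s y : ℝ} (hs₀ : 0 < s) (hs₁ : s < 1) (hy : 1 < y) :
    (y ^ s - 1) / (y - 1) < s := by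
  have h := rpow_one_add_lt_one_add_mul_self (s := y - 1) (by linarith) (by linarith) hs₀ hs₁
  rw [add_sub_cancel] at h
  rw [div_lt_iff₀ (by linarith)]
  linarith

theorem lt_rpow_sub_one_div_sub_one {s y : ℝ} (hs₀ : 0 < s) (hs₁ : s < 1) (hy₀ : 0 ≤ y)
    (hy : y < 1) : s < (y ^ s - 1) / (y - 1) := by
  have h := rpow_one_add_lt_one_add_mul_self (s := y - 1) (by linarith) (by linarith) hs₀ hs₁
  rw [add_sub_cancel] at h
  rw [lt_div_iff_of_neg (by linarith)]
  linarith

theorem strictAntiOn_rpow_sub_one_div_sub_one {s : ℝ} (hs₀ : 0 < s) (hs₁ : s < 1) :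
    StrictAntiOn (fun y : ℝ => if y = 1 then s else (y ^ s - 1) / (y - 1)) (Ici 0) := by
  intro y (hy : 0 ≤ y) z (hz : 0 ≤ z) hyz
  by_cases hy1 : y = 1
  · subst hy1
    simpa [hyz.ne'] using rpow_sub_one_div_sub_one_lt hs₀ hs₁ hyz
  by_cases hz1 : z = 1
  · subst hz1
    simpa [hy1] using lt_rpow_sub_one_div_sub_one hs₀ hs₁ hy hyz
  simpa [hy1, hz1] using
    (strictConcaveOn_rpow hs₀ hs₁).secant_strict_mono (a := 1) (mem_Ici.2 zero_le_one) hy hz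
      hy1 hz1 hyz

theorem strictAntiOn_rpow_sub_one_div_rpow_sub_one {a r : ℝ} (ha : 0 < a) (har : a < r) :
    StrictAntiOn (fun x : ℝ => if x = 1 then a / r else (x ^ a - 1) / (x ^ r - 1)) (Ioi 0) := by
  have hr : 0 < r := ha.trans har
  have hcomp := (strictAntiOn_rpow_sub_one_div_sub_one (div_pos ha hr)
    ((div_lt_one hr).2 har)).comp_strictMonoOn
    ((strictMonoOn_rpow_Ici_of_exponent_pos hr).mono Ioi_subset_Ici_self)
    fun x (hx : 0 < x) => rpow_nonneg hx.le r
  refine hcomp.congr fun x (hx : 0 < x) => ?_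
  have hx1 : x ^ r = 1 ↔ x = 1 := by
    rw [← rpow_left_inj hx.le zero_le_one hr.ne', one_rpow]
  simp only [Function.comp_apply, hx1, ← rpow_mul hx.le, mul_div_cancel₀ a hr.ne']

end Real

theorem neg_ratio_strictMono_general (r : ℝ) (k : ℕ) (hk : 1 ≤ k)
    (hkr : (k : ℝ) < r) :
    StrictMonoOn
      (fun x : ℝ => if x = 1 then -(k : ℝ)/r else -(x^k - 1)/(x^(r : ℝ) - 1))
      (Set.Ioi 0) := by
  have hk₀ : (0 : ℝ) < k := by exact_mod_cast hk
  refine (Real.strictAntiOn_rpow_sub_one_div_rpow_sub_one hk₀ hkr).neg.congr fun x _ => ?_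
  simp only [Real.rpow_natCast, neg_div]
  exact apply_ite _ _ _ _

/-- For real `r > 1` and integer `1 ≤ k` with `k < r`, the function
`x ↦ -(x^k - 1)/(x^r - 1)` (extended by `-k/r` at `x = 1`) is strictly increasing
on `(0, ∞)`. -/
theorem neg_ratio_strictMono (r : ℝ) (hr : 1 < r) (k : ℕ) (hk : 1 ≤ k)
    (hkr : (k : ℝ) < r) :
    StrictMonoOn
      (fun x : ℝ => if x = 1 then -(k : ℝ)/r else -(x^k - 1)/(x^(r : ℝ) - 1))
      (Set.Ioi 0) :=
  neg_ratio_strictMono_general r k hk hkr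
end

section
/- Let N ≥ 1 and v_1 ≤ v_3 ≤ ... ≤ v_{2N+1} with v_1 < v_{2N+1}. Then F(a) = (Σ_{k=0}^{N} v_{2k+1} a^{2k})/(Σ_{k=0}^{N} a^{2k}) is strictly increasing in a on [0,2]. -/
/-!
Substituting `x = a²`, `F` is the average of the nondecreasing sequence `t k = v (2k+1)`
against the weights `x ^ k`. For `0 ≤ x < y`, cross-multiplying the two averages leaves
half of `∑ i j, (t i - t j) * (y^i x^j - x^i y^j)`, a sum of nonnegative terms
(both factors change sign together) whose `(N, 0)` term is positive.
-/

open Finset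

section
variable {R : Type*}

theorem sum_sum_sub_mul_sub_eq {ι : Type*} [CommRing R] (s : Finset ι) (t p q : ι → R) :
    ∑ i ∈ s, ∑ j ∈ s, (t i - t j) * (q i * p j - p i * q j) =
      2 * ((∑ i ∈ s, t i * q i) * ∑ i ∈ s, p i - (∑ i ∈ s, t i * p i) * ∑ i ∈ s, q i) := by
  have expand : ∀ i j, (t i - t j) * (q i * p j - p i * q j) =
      (t i * q i * p j - t i * p i * q j) + (t j * q j * p i - t j * p j * q i) :=
    fun i j => by ring
  simp_rw [expand, sum_add_distrib, sum_sub_distrib]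
  rw [sum_comm (f := fun i j => t j * q j * p i), sum_comm (f := fun i j => t j * p j * q i),
    ← sum_mul_sum, ← sum_mul_sum]
  ring

theorem pow_mul_pow_le_pow_mul_pow [CommSemiring R] [PartialOrder R] [IsOrderedRing R]
    {x y : R} (hx : 0 ≤ x) (hxy : x ≤ y) {j k : ℕ} (hjk : j ≤ k) :
    x ^ k * y ^ j ≤ y ^ k * x ^ j := by
  have hy : 0 ≤ y := hx.trans hxy
  obtain ⟨m, rfl⟩ := Nat.exists_eq_add_of_le hjk
  calc x ^ (j + m) * y ^ j = (x ^ j * y ^ j) * x ^ m := by ring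
    _ ≤ (x ^ j * y ^ j) * y ^ m := by gcongr
    _ = y ^ (j + m) * x ^ j := by ring

theorem sub_mul_pow_sub_nonneg [CommRing R] [LinearOrder R] [IsStrictOrderedRing R]
    {N : ℕ} {t : ℕ → R} (ht : MonotoneOn t (Set.Iic N))
    {x y : R} (hx : 0 ≤ x) (hxy : x ≤ y) {i j : ℕ} (hi : i ≤ N) (hj : j ≤ N) :
    0 ≤ (t i - t j) * (y ^ i * x ^ j - x ^ i * y ^ j) := by
  rcases le_total j i with hji | hij
  · exact mul_nonneg (sub_nonneg.2 (ht hj hi hji))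
      (sub_nonneg.2 (pow_mul_pow_le_pow_mul_pow hx hxy hji))
  · exact mul_nonneg_of_nonpos_of_nonpos (sub_nonpos.2 (ht hi hj hij))
      (by linarith [pow_mul_pow_le_pow_mul_pow hx hxy hij])

theorem sum_mul_pow_mul_sum_pow_lt [CommRing R] [LinearOrder R] [IsStrictOrderedRing R]
    {N : ℕ} {t : ℕ → R} (ht : MonotoneOn t (Set.Iic N))
    (hlt : t 0 < t N) {x y : R} (hx : 0 ≤ x) (hxy : x < y) :
    (∑ k ∈ range (N + 1), t k * x ^ k) * ∑ k ∈ range (N + 1), y ^ k <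
      (∑ k ∈ range (N + 1), t k * y ^ k) * ∑ k ∈ range (N + 1), x ^ k := by
  have hN : N ≠ 0 := by rintro rfl; exact hlt.false
  have hnonneg : ∀ i ∈ range (N + 1), ∀ j ∈ range (N + 1),
      0 ≤ (t i - t j) * (y ^ i * x ^ j - x ^ i * y ^ j) := fun i hi j hj =>
    sub_mul_pow_sub_nonneg ht hx hxy.le (Nat.lt_succ_iff.1 (mem_range.1 hi))
      (Nat.lt_succ_iff.1 (mem_range.1 hj))
  have hcorner : 0 < (t N - t 0) * (y ^ N * x ^ 0 - x ^ N * y ^ 0) := by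
    simpa using mul_pos (sub_pos.2 hlt) (sub_pos.2 (pow_lt_pow_left₀ hxy hx hN))
  have hN_mem : N ∈ range (N + 1) := self_mem_range_succ N
  have h0_mem : 0 ∈ range (N + 1) := mem_range.2 N.succ_pos
  have hpos : 0 < ∑ i ∈ range (N + 1), ∑ j ∈ range (N + 1),
      (t i - t j) * (y ^ i * x ^ j - x ^ i * y ^ j) :=
    sum_pos' (fun i hi => sum_nonneg (hnonneg i hi))
      ⟨N, hN_mem, sum_pos' (hnonneg N hN_mem) ⟨0, h0_mem, hcorner⟩⟩
  rw [sum_sum_sub_mul_sub_eq] at hpos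
  linarith

theorem strictMonoOn_sum_mul_pow_div_sum_pow
    [Field R] [LinearOrder R] [IsStrictOrderedRing R] {N : ℕ} {t : ℕ → R}
    (ht : MonotoneOn t (Set.Iic N)) (hlt : t 0 < t N) :
    StrictMonoOn (fun x : R => (∑ k ∈ range (N + 1), t k * x ^ k) / ∑ k ∈ range (N + 1), x ^ k)
      (Set.Ici 0) := by
  have hden : ∀ x : R, 0 ≤ x → 0 < ∑ k ∈ range (N + 1), x ^ k := fun x hx =>
    sum_pos' (fun k _ => pow_nonneg hx k) ⟨0, mem_range.2 N.succ_pos, by simp⟩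
  intro x hx y hy hxy
  rw [div_lt_div_iff₀ (hden x hx) (hden y hy)]
  exact sum_mul_pow_mul_sum_pow_lt ht hlt hx hxy

end

theorem F_strictMono_general (N : ℕ) (v : ℕ → ℝ)
    (hmono : ∀ k : ℕ, 1 ≤ k → k ≤ N → v (2*k-1) ≤ v (2*k+1))
    (hlt : v 1 < v (2*N+1)) :
    StrictMonoOn
      (fun a : ℝ => (∑ k ∈ Finset.range (N+1), v (2*k+1) * a^(2*k)) /
        (∑ k ∈ Finset.range (N+1), a^(2*k)))
      (Set.Icc 0 2) := by
  have hodd : MonotoneOn (fun k => v (2 * k + 1)) (Set.Iic N) :=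
    monotoneOn_of_le_succ Set.ordConnected_Iic fun k _ _ hk => by
      simpa [mul_add] using hmono (k + 1) k.succ_pos hk
  have hsq : StrictMonoOn (fun a : ℝ => a ^ 2) (Set.Icc 0 2) :=
    (pow_left_strictMonoOn₀ two_ne_zero).mono Set.Icc_subset_Ici_self
  simpa only [Function.comp_def, pow_mul] using
    (strictMonoOn_sum_mul_pow_div_sum_pow hodd hlt).comp hsq fun a _ => sq_nonneg a

/-- If `v_1 ≤ v_3 ≤ … ≤ v_{2N+1}` with `v_1 < v_{2N+1}`, then
`F(a) = (Σ_{k=0}^N v_{2k+1} a^{2k})/(Σ_{k=0}^N a^{2k})` is strictly increasing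
on `[0,2]`. -/
theorem F_strictMono (N : ℕ) (hN : 1 ≤ N) (v : ℕ → ℝ)
    (hmono : ∀ k : ℕ, 1 ≤ k → k ≤ N → v (2*k-1) ≤ v (2*k+1))
    (hlt : v 1 < v (2*N+1)) :
    StrictMonoOn
      (fun a : ℝ => (∑ k ∈ Finset.range (N+1), v (2*k+1) * a^(2*k)) /
        (∑ k ∈ Finset.range (N+1), a^(2*k)))
      (Set.Icc 0 2) :=
  F_strictMono_general N v hmono hlt
end
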